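/- arXiv:2508.11949 — 2 statements merged into one kernel-verified Lean document; each statement's English description precedes it below -/
import Mathlib

section
/- Let X be a set, T a topology, ≤ a preorder on X, and F a family of real functions on X such that: (1) the graph of ≤ equals {(p,q) : ∀f ∈ F, f(p) ≤ f(q)}, and (2) T is the initial topology of F. Then the filter on X × X generated by the sets U_{f,b} := {(p,q) : f(p) − f(q) < b} for f ∈ F, b > 0, is a quasi-uniformity: for each such generated set U there exists a generated set V with V ∘ V ⊆ U; moreover the intersection of all elements of this quasi-uniformity equals the graph of ≤. -/
/-- If the graph of a preorder `≤` equals `{(p,q) : ∀ f ∈ F, f p ≤ f q}`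
and the topology is the initial topology of `F`, then the filter generated by the sets
`U_{f,b} = {(p,q) : f p - f q < b}` (`f ∈ F`, `b > 0`) is a quasi-uniformity whose
intersection is the graph of `≤`. -/
theorem stmt_10 {X : Type*} (T : TopologicalSpace X) (F : Set (X → ℝ))
    (le : X → X → Prop)
    (hrefl : ∀ x, le x x) (htrans : ∀ x y z, le x y → le y z → le x z)
    (hgraph : ∀ p q : X, le p q ↔ ∀ f ∈ F, f p ≤ f q)
    (hT : T = ⨅ f ∈ F, TopologicalSpace.induced f inferInstance)
    (Q : Filter (X × X))
    (hQ : Q = Filter.generate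
      {U | ∃ f ∈ F, ∃ b : ℝ, 0 < b ∧ U = {p : X × X | f p.1 - f p.2 < b}}) :
    (∀ U ∈ Q, SetRel.id ⊆ U) ∧
    (∀ U ∈ Q, ∃ V ∈ Q, SetRel.comp V V ⊆ U) ∧
    (⋂₀ Q.sets = {p : X × X | le p.1 p.2}) := by
  subst hQ
  refine ⟨?_, ?_, ?_⟩
  · intro U hU
    induction hU with
    | basic hU =>
      obtain ⟨f, hf, b, hb, rfl⟩ := hU
      rintro ⟨x, y⟩ hxy
      rw [SetRel.mem_id] at hxy
      subst hxy
      simpa using hb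
    | univ => exact Set.subset_univ _
    | superset _ h ih => exact ih.trans h
    | inter _ _ ih1 ih2 => exact Set.subset_inter ih1 ih2
  · intro U hU
    induction hU with
    | basic hU =>
      obtain ⟨f, hf, b, hb, rfl⟩ := hU
      refine ⟨{p : X × X | f p.1 - f p.2 < b / 2},
        Filter.mem_generate_of_mem ⟨f, hf, b / 2, by linarith, rfl⟩, ?_⟩
      rintro ⟨x, z⟩ ⟨y, h1, h2⟩
      simp only [Set.mem_setOf_eq] at *
      linarith
    | univ => exact ⟨Set.univ, Filter.univ_mem, Set.subset_univ _⟩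
    | superset _ h ih =>
      obtain ⟨V, hV, hVV⟩ := ih
      exact ⟨V, hV, hVV.trans h⟩
    | inter _ _ ih1 ih2 =>
      obtain ⟨V1, hV1, h1⟩ := ih1
      obtain ⟨V2, hV2, h2⟩ := ih2
      refine ⟨V1 ∩ V2, Filter.inter_mem hV1 hV2, ?_⟩
      exact Set.subset_inter
        ((SetRel.comp_subset_comp Set.inter_subset_left Set.inter_subset_left).trans h1)
        ((SetRel.comp_subset_comp Set.inter_subset_right Set.inter_subset_right).trans h2)
  · ext ⟨p, q⟩
    simp only [Set.mem_sInter, Filter.mem_sets, Set.mem_setOf_eq]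
    constructor
    · intro h
      rw [hgraph]
      intro f hf
      by_contra hlt
      push_neg at hlt
      have := h _ (Filter.mem_generate_of_mem
        ⟨f, hf, f p - f q, by linarith, rfl⟩)
      simp only [Set.mem_setOf_eq] at this
      linarith
    · intro h U hU
      induction hU with
      | basic hU =>
        obtain ⟨f, hf, b, hb, rfl⟩ := hU
        have := (hgraph p q).mp h f hf
        simp only [Set.mem_setOf_eq]
        linarith
      | univ => trivial
      | superset _ hsub ih => exact hsub ih
      | inter _ _ ih1 ih2 => exact ⟨ih1, ih2⟩
end

section
/- Let X be a set and ≤↓ a preorder on X × ℝ satisfying property (*): if (p,r) ≤↓ (p',r') and max(0, s'−s) ≤ max(0, r'−r) then (p,s) ≤↓ (p',s'). Define the projected relation x ≤ y iff (x,0) ≤↓ (y,0), and τ(x,y) := sup{b : (x,0) ≤↓ (y,b)} (−∞ if the set is empty). Then ≤ is a preorder on X, τ(x,y) ≥ 0 iff x ≤ y, and τ satisfies the reverse triangle inequality τ(x,y) + τ(y,z) ≤ τ(x,z) for all x,y,z (with convention −∞ + t = −∞). -/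
/-!
Property (*) makes `≤↓` invariant under shifting both time coordinates by the same amount and
lets one lower the time of the target. Hence `(x,0) ≤↓ (y,a)` and `(y,0) ≤↓ (z,b)` give
`(x,0) ≤↓ (y,a) ≤↓ (z,a+b)`, so the set defining `τ(x,z)` contains the sum of the sets defining
`τ(x,y)` and `τ(y,z)`, which yields the reverse triangle inequality after taking suprema.
-/

theorem EReal.sSup_coe_image_add_le {A B C : Set ℝ} (h : ∀ a ∈ A, ∀ b ∈ B, a + b ∈ C) :
    sSup (((↑) : ℝ → EReal) '' A) + sSup (((↑) : ℝ → EReal) '' B) ≤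
      sSup (((↑) : ℝ → EReal) '' C) := by
  refine EReal.add_le_of_forall_lt fun a' ha' b' hb' => ?_
  obtain ⟨_, ⟨a, ha, rfl⟩, ha'a⟩ := lt_sSup_iff.1 ha'
  obtain ⟨_, ⟨b, hb, rfl⟩, hb'b⟩ := lt_sSup_iff.1 hb'
  calc a' + b' ≤ (a : EReal) + b := add_le_add ha'a.le hb'b.le
    _ = ((a + b : ℝ) : EReal) := rfl
    _ ≤ _ := le_sSup (Set.mem_image_of_mem _ (h a ha b hb))

theorem EReal.sSup_coe_image_nonneg_iff {A : Set ℝ} (hA : ∀ a ∈ A, 0 ∈ A) :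
    0 ≤ sSup (((↑) : ℝ → EReal) '' A) ↔ 0 ∈ A := by
  refine ⟨fun h => ?_, fun h0 => le_sSup ⟨0, h0, rfl⟩⟩
  obtain ⟨a, ha⟩ : A.Nonempty := by
    by_contra hA
    simp [Set.not_nonempty_iff_eq_empty.1 hA] at h
  exact hA a ha

section StarProperty

variable {X : Type*} {led : X × ℝ → X × ℝ → Prop}
  (hstar : ∀ p p' : X, ∀ r r' s s' : ℝ, led (p, r) (p', r') →
      max 0 (s' - s) ≤ max 0 (r' - r) → led (p, s) (p', s'))
include hstar

theorem led_zero_of_led {x y : X} {b : ℝ} (h : led (x, 0) (y, b)) : led (x, 0) (y, 0) :=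
  hstar x y 0 b 0 0 h (by simp)

theorem led_shift {y z : X} (a : ℝ) {b : ℝ} (h : led (y, 0) (z, b)) : led (y, a) (z, a + b) :=
  hstar y z 0 b a (a + b) h (by simp)

end StarProperty

/-- Given a preorder `≤↓` on `X × ℝ` satisfying property (*), the
projected relation `x ≤ y ↔ (x,0) ≤↓ (y,0)` is a preorder, the time separation
`τ(x,y) = sup{b : (x,0) ≤↓ (y,b)}` (which is `−∞` when the set is empty) is
nonnegative exactly on the graph of `≤`, and `τ` satisfies the reverse triangle
inequality. -/
theorem stmt_15 {X : Type*} (led : X × ℝ → X × ℝ → Prop)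
    (hrefl : Reflexive led) (htrans : Transitive led)
    (hstar : ∀ p p' : X, ∀ r r' s s' : ℝ, led (p, r) (p', r') →
      max 0 (s' - s) ≤ max 0 (r' - r) → led (p, s) (p', s'))
    (le : X → X → Prop) (hle : ∀ x y, le x y ↔ led (x, 0) (y, 0))
    (τ : X → X → EReal)
    (hτ : ∀ x y, τ x y = sSup (((↑) : ℝ → EReal) '' {b : ℝ | led (x, 0) (y, b)})) :
    (Reflexive le ∧ Transitive le) ∧
    (∀ x y, 0 ≤ τ x y ↔ le x y) ∧
    (∀ x y z, τ x y + τ y z ≤ τ x z) := by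
  refine ⟨⟨fun x => (hle x x).2 (hrefl _), fun x y z hxy hyz =>
      (hle x z).2 (htrans ((hle x y).1 hxy) ((hle y z).1 hyz))⟩, fun x y => ?_, fun x y z => ?_⟩
  · rw [hτ, hle]
    exact EReal.sSup_coe_image_nonneg_iff fun _ => led_zero_of_led hstar
  · simp only [hτ]
    exact EReal.sSup_coe_image_add_le fun a ha b hb => htrans ha (led_shift hstar a hb)
end
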